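/- arXiv:1710.07060 — 6 statements merged into one kernel-verified Lean document; each statement's English description precedes it below -/
import Mathlib

section
/- Let μ be a Radon measure on (∂H²)⁽²⁾ and let (x₁,x₂,x₃,x₄) be a positively oriented 4-tuple of points on the circle ∂H². If the geodesics (x₁,x₃) and (x₂,x₄) are μ-somewhat short (i.e. μ(]x₁,x₃[ × ]x₃,x₁[) = 0 and μ(]x₂,x₄[ × ]x₄,x₂[) = 0), then the geodesic (x₁,x₂) is also μ-somewhat short, i.e. μ(]x₁,x₂[ × ]x₂,x₁[) = 0. -/
open MeasureTheory Set ENNReal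

/-- The open arc `]a,b[` on a circularly ordered set. -/
def oarc {S : Type*} [CircularOrder S] (a b : S) : Set S := {x | sbtw a x b}

/-- `(a,b)` is `μ`-somewhat short. -/
def SomewhatShort {S : Type*} [CircularOrder S] [MeasurableSpace S]
    (μ : Measure (S × S)) (a b : S) : Prop :=
  μ ((oarc a b) ×ˢ (oarc b a)) = 0

/-- `(x₁,x₂,x₃,x₄)` is a positively oriented 4-tuple. -/
def Pos4 {S : Type*} [CircularOrder S] (x₁ x₂ x₃ x₄ : S) : Prop :=
  sbtw x₁ x₂ x₃ ∧ sbtw x₂ x₃ x₄ ∧ sbtw x₃ x₄ x₁ ∧ sbtw x₄ x₁ x₂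

/-- if the diagonals `(x₁,x₃)` and `(x₂,x₄)` of a positively oriented
quadrilateral are `μ`-somewhat short, then so is the side `(x₁,x₂)`. -/
theorem side_somewhat_short_of_diagonals
    {S : Type*} [CircularOrder S] [MeasurableSpace S]
    (μ : Measure (S × S))
    (hflip : ∀ A B : Set S, μ (A ×ˢ B) = μ (B ×ˢ A))
    (x₁ x₂ x₃ x₄ : S) (hpos : Pos4 x₁ x₂ x₃ x₄)
    (h13 : SomewhatShort μ x₁ x₃) (h24 : SomewhatShort μ x₂ x₄) :
    SomewhatShort μ x₁ x₂ := by
  obtain ⟨h123, h234, h341, h412⟩ := hpos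
  have hsub : (oarc x₁ x₂) ×ˢ (oarc x₂ x₁) ⊆
      ((oarc x₁ x₃) ×ˢ (oarc x₃ x₁)) ∪ ((oarc x₄ x₂) ×ˢ (oarc x₂ x₄)) := by
    rintro ⟨x, y⟩ ⟨hx, hy⟩
    have hx13 : sbtw x₁ x x₃ := sbtw_trans_right hx h123
    have hx42 : sbtw x₄ x x₂ := h412.trans_left hx
    have hy21 : sbtw x₂ y x₁ := hy
    -- y ∈ ]x₂,x₄[ ∪ ]x₃,x₁[
    by_cases hcase : sbtw x₂ y x₄
    · exact Or.inr ⟨hx42, hcase⟩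
    · left
      refine ⟨hx13, ?_⟩
      -- from ¬ sbtw x₂ y x₄ get btw x₄ y x₂
      have hb : btw x₄ y x₂ := btw_iff_not_sbtw.mpr hcase
      by_cases hy4 : y = x₄
      · exact hy4 ▸ h341
      · have hs42 : sbtw x₄ y x₂ := by
          refine sbtw_of_btw_not_btw hb fun hb' => ?_
          rcases hb'.antisymm hb with h | h | h
          · exact sbtw_irrefl_left (h ▸ hy21)
          · exact hy4 h
          · exact sbtw_irrefl_left_right (h ▸ h234)
        -- sbtw x₄ y x₁ : from y's viewpoint x₁ before x₂ before x₄
        have h1 : sbtw y x₁ x₂ := hy21.cyclic_left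
        have h2 : sbtw y x₂ x₄ := hs42.cyclic_left
        have h3 : sbtw y x₁ x₄ := sbtw_trans_right h1 h2
        exact h341.trans_left h3.cyclic_right
  apply measure_mono_null hsub
  refine measure_union_null h13 ?_
  rw [hflip]; exact h24
end

section
/- Let μ be a Radon measure on the space of pairs of distinct points of the circle and let a,b,c,d,e be five distinct points on the circle. Assume the geodesics (a,b) and (c,d) cross (i.e. exactly one of c,d lies in the open arc ]a,b[), and assume that (a,b), (c,d), (e,a) and (e,b) are all μ-somewhat short. Then (e,c) and (e,d) are μ-somewhat short. -/
open MeasureTheory Set ENNReal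

/-- The geodesics `(a,b)` and `(c,d)` cross: exactly one of `c,d` lies in `]a,b[`. -/
def Crosses {S : Type*} [CircularOrder S] (a b c d : S) : Prop :=
  Xor' (c ∈ oarc a b) (d ∈ oarc a b)

section Helpers

variable {S : Type*} [CircularOrder S]

lemma helper1 {a x m b : S} (h1 : sbtw a x m) (h2 : sbtw a m b) : sbtw x m b :=
  (h2.cyclic_left.trans_right h1.cyclic_right).cyclic_right

lemma helper2 {a m b x : S} (h1 : sbtw m x b) (h2 : sbtw a m b) : sbtw a m x :=
  (h1.trans_right h2.cyclic_left).cyclic_right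

lemma sbtw_split {a m b y : S} (hm : sbtw a m b) (hy : sbtw a y b) (hne : y ≠ m) :
    sbtw a y m ∨ sbtw m y b := by
  by_cases h1 : sbtw a y m
  · exact Or.inl h1
  · right
    rw [sbtw_iff_not_btw, not_not] at h1
    by_contra h2
    rw [sbtw_iff_not_btw, not_not] at h2
    have hmya : sbtw m y a := sbtw_of_btw_not_btw h1 (fun h => by
      rcases btw_antisymm h h1 with h' | h' | h'
      · exact sbtw_irrefl_left (h' ▸ hy)
      · exact hne h'
      · exact sbtw_irrefl_left (h' ▸ hm)
    )
    have hbym : sbtw b y m := sbtw_of_btw_not_btw h2 (fun h => by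
      rcases btw_antisymm h h2 with h' | h' | h'
      · exact hne h'.symm
      · exact sbtw_irrefl_right (h' ▸ hy)
      · exact sbtw_irrefl_right (h' ▸ hm)
    )
    have habY : sbtw a b y :=
      sbtw_trans_left hmya.cyclic_right (hbym.cyclic_left.cyclic_left)
    exact hy.not_btw habY.btw.cyclic_left

lemma sbtw_of_not_sbtw {a b d : S} (h : ¬sbtw a d b) (hda : d ≠ a) (hdb : d ≠ b)
    (hba : b ≠ a) : sbtw b d a := by
  rw [sbtw_iff_not_btw, not_not] at h
  exact sbtw_of_btw_not_btw h (fun h' => by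
    rcases btw_antisymm h h' with h'' | h'' | h''
    · exact hdb h''.symm
    · exact hda h''
    · exact hba h''.symm)

end Helpers

section Quad

variable {S : Type*} [CircularOrder S] [MeasurableSpace S]

lemma ss_symm (μ : Measure (S × S)) (hflip : ∀ A B : Set S, μ (A ×ˢ B) = μ (B ×ˢ A))
    {x y : S} (h : SomewhatShort μ x y) : SomewhatShort μ y x := by
  unfold SomewhatShort at *
  rw [hflip]; exact h

/-- The quadrilateral lemma: in a positively oriented quadrilateral with both diagonals
somewhat short, the side `(x1,x2)` is somewhat short. -/
lemma quad (μ : Measure (S × S)) (hflip : ∀ A B : Set S, μ (A ×ˢ B) = μ (B ×ˢ A))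
    {x1 x2 x3 x4 : S} (h123 : sbtw x1 x2 x3) (h134 : sbtw x1 x3 x4)
    (h13 : SomewhatShort μ x1 x3) (h24 : SomewhatShort μ x2 x4) :
    SomewhatShort μ x1 x2 := by
  have h231 := h123.cyclic_left
  have h341 := h134.cyclic_left
  have h241 : sbtw x2 x4 x1 := h231.trans_left h341
  have h412 : sbtw x4 x1 x2 := h241.cyclic_left
  have h234 : sbtw x2 x3 x4 := (h341.trans_right h123.cyclic_right).cyclic_right
  have key : (oarc x1 x2) ×ˢ (oarc x2 x1) ⊆
      ((oarc x1 x3) ×ˢ (oarc x3 x1)) ∪ ((oarc x4 x2) ×ˢ (oarc x2 x4)) := by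
    rintro ⟨x, y⟩ ⟨hx, hy⟩
    simp only [oarc, mem_setOf_eq] at hx hy
    have hx13 : sbtw x1 x x3 := hx.trans_right h123
    have hx42 : sbtw x4 x x2 := h412.trans_left hx
    by_cases hyx3 : y = x3
    · exact Or.inr ⟨hx42, hyx3 ▸ h234⟩
    · rcases sbtw_split h231 hy hyx3 with h | h
      · exact Or.inr ⟨hx42, h.trans_right h234⟩
      · exact Or.inl ⟨hx13, h⟩
  exact measure_mono_null key (measure_union_null h13 (by rw [hflip]; exact h24))

/-- The core of the five-point lemma, assuming `c ∈ ]a,b[` and `d ∈ ]b,a[`. -/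
lemma five_point_aux (μ : Measure (S × S))
    (hflip : ∀ A B : Set S, μ (A ×ˢ B) = μ (B ×ˢ A))
    {a b c d e : S} (hc : sbtw a c b) (hd : sbtw b d a)
    (hea' : e ≠ a) (heb' : e ≠ b) (hec' : e ≠ c) (hed' : e ≠ d)
    (hcd : SomewhatShort μ c d)
    (hea : SomewhatShort μ e a) (heb : SomewhatShort μ e b) :
    SomewhatShort μ e c ∧ SomewhatShort μ e d := by
  have hba : b ≠ a := fun h => sbtw_irrefl_left_right (h ▸ hc)
  have hcba : sbtw c b a := hc.cyclic_left
  have hdab : sbtw d a b := hd.cyclic_left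
  have hcbd : sbtw c b d := helper2 hd hcba
  have hcda : sbtw c d a := hcba.trans_left hd
  have hdac : sbtw d a c := helper2 hc hdab
  have hdcb : sbtw d c b := hdab.trans_left hc
  have hpos : sbtw a e b ∨ sbtw b e a := by
    by_cases h : sbtw a e b
    · exact Or.inl h
    · exact Or.inr (sbtw_of_not_sbtw h hea' heb' hba)
  rcases hpos with h | h
  · rcases sbtw_split hc h hec' with hA | hB
    · -- Case A : cyclic order a, e, c, b, d
      have h_ecb : sbtw e c b := helper1 hA hc
      have h_aeb : sbtw a e b := hA.trans_right hc
      have h_ebd : sbtw e b d := helper1 h_aeb hd.cyclic_right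
      have h_dec : sbtw d e c := hdac.trans_left hA
      exact ⟨quad μ hflip h_ecb h_ebd heb hcd,
        ss_symm μ hflip (quad μ hflip h_dec hdcb (ss_symm μ hflip hcd) heb)⟩
    · -- Case B : cyclic order a, c, e, b, d
      have h_eba : sbtw e b a := helper1 hB hcba
      have h_eda : sbtw e d a := h_eba.trans_left hd
      have h_ace : sbtw a c e := helper2 hB hc
      have h_eac : sbtw e a c := h_ace.cyclic_left.cyclic_left
      have h_ced : sbtw c e d := hB.trans_right hcbd
      exact ⟨ss_symm μ hflip (quad μ hflip h_ced hcda hcd hea),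
        quad μ hflip h_eda h_eac hea (ss_symm μ hflip hcd)⟩
  · rcases sbtw_split hd h hed' with hC | hD
    · -- Case C : cyclic order a, c, b, e, d
      have h_eda : sbtw e d a := helper1 hC hd
      have h_bea : sbtw b e a := hC.trans_right hd
      have h_eac : sbtw e a c := helper1 h_bea hcba.cyclic_left
      have h_ced : sbtw c e d := hcbd.trans_left hC
      exact ⟨ss_symm μ hflip (quad μ hflip h_ced hcda hcd hea),
        quad μ hflip h_eda h_eac hea (ss_symm μ hflip hcd)⟩
    · -- Case D : cyclic order a, c, b, d, e
      have h_eab : sbtw e a b := helper1 hD hdab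
      have h_ecb : sbtw e c b := h_eab.trans_left hc
      have h_bde : sbtw b d e := helper2 hD hd
      have h_ebd : sbtw e b d := h_bde.cyclic_left.cyclic_left
      have h_dec : sbtw d e c := hD.trans_right hdac
      exact ⟨quad μ hflip h_ecb h_ebd heb hcd,
        ss_symm μ hflip (quad μ hflip h_dec hdcb (ss_symm μ hflip hcd) heb)⟩

end Quad

/-- five-point lemma: if `(a,b) ⋔ (c,d)` and `(a,b)`, `(c,d)`, `(e,a)`,
`(e,b)` are `μ`-somewhat short, then `(e,c)` and `(e,d)` are `μ`-somewhat short. -/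
theorem five_point_somewhat_short
    {S : Type*} [CircularOrder S] [MeasurableSpace S]
    (μ : Measure (S × S))
    (hflip : ∀ A B : Set S, μ (A ×ˢ B) = μ (B ×ˢ A))
    (a b c d e : S)
    (hdist : List.Pairwise (· ≠ ·) [a, b, c, d, e])
    (hcross : Crosses a b c d)
    (hab : SomewhatShort μ a b) (hcd : SomewhatShort μ c d)
    (hea : SomewhatShort μ e a) (heb : SomewhatShort μ e b) :
    SomewhatShort μ e c ∧ SomewhatShort μ e d := by
  simp only [List.pairwise_cons, List.mem_cons, List.not_mem_nil, or_false,
    forall_eq_or_imp, forall_eq, List.Pairwise] at hdist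
  obtain ⟨⟨hab', hac, had, hae⟩, ⟨hbc, hbd, hbe⟩, ⟨hcd', hce⟩, hde, -⟩ := hdist
  have hba : b ≠ a := hab'.symm
  rcases hcross with ⟨hcmem, hdnm⟩ | ⟨hdmem, hcnm⟩
  · have hc : sbtw a c b := hcmem
    have hd : sbtw b d a := sbtw_of_not_sbtw hdnm had.symm hbd.symm hba
    exact five_point_aux μ hflip hc hd hae.symm hbe.symm hce.symm hde.symm hcd hea heb
  · have hd : sbtw a d b := hdmem
    have hc : sbtw b c a := sbtw_of_not_sbtw hcnm hac.symm hbc.symm hba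
    obtain ⟨h1, h2⟩ := five_point_aux μ hflip hd hc hae.symm hbe.symm hde.symm hce.symm
      (ss_symm μ hflip hcd) hea heb
    exact ⟨h2, h1⟩
end

section
/- Let μ be a Radon measure on pairs of distinct circle points and let g₀, g₁, …, g_{r+1} be geodesics (pairs of distinct points on the circle), each μ-somewhat short, such that g_k crosses g_{k+1} for 0 ≤ k ≤ r. Write g_k = (x_k, y_k) with endpoints labeled so that (x_k, x_{k+1}, y_k, y_{k+1}) is positively oriented for each k. Then for every index 0 ≤ k ≤ r+1 for which the pair is defined (i.e. its two points are distinct), the geodesics (x₀, x_k) and (x₀, y_k) are μ-somewhat short, and likewise (y₀, x_k) and (y₀, y_k) are μ-somewhat short. -/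
open MeasureTheory Set ENNReal

section Helpers

variable {S : Type*} [CircularOrder S]

lemma my_ne12 {a b c : S} (h : sbtw a b c) : a ≠ b := by
  rintro rfl; exact sbtw_irrefl_left h

lemma my_ne23 {a b c : S} (h : sbtw a b c) : b ≠ c := by
  rintro rfl; exact sbtw_irrefl_right h

lemma my_ne13 {a b c : S} (h : sbtw a b c) : a ≠ c := by
  rintro rfl; exact sbtw_irrefl_left_right h

lemma my_flip {a t b : S} (hab : a ≠ b) (hat : a ≠ t) (htb : t ≠ b)
    (h : ¬ sbtw a t b) : sbtw b t a := by
  have hbta : btw b t a := not_not.1 fun hn => h (sbtw_iff_not_btw.2 hn)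
  have hnab : ¬ btw a t b := by
    intro h2
    rcases btw_antisymm h2 hbta with h3 | h3 | h3
    · exact hat h3
    · exact htb h3
    · exact hab h3.symm
  exact sbtw_iff_btw_not_btw.2 ⟨hbta, hnab⟩

lemma my_split {p m q t : S} (hm : sbtw p m q) (ht : sbtw p t q) (htm : t ≠ m) :
    sbtw p t m ∨ sbtw m t q := by
  by_cases h1 : sbtw p t m
  · exact Or.inl h1
  right
  by_contra h2
  have hq : btw q t m := not_not.1 fun hn => h2 (sbtw_iff_not_btw.2 hn)
  have hnmtq : ¬ btw m t q := by
    intro hmt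
    rcases btw_antisymm hmt hq with h3 | h3 | h3
    · exact htm h3.symm
    · exact my_ne23 ht h3
    · exact my_ne23 hm h3.symm
  have hqtm : sbtw q t m := sbtw_iff_btw_not_btw.2 ⟨hq, hnmtq⟩
  have h4 : sbtw t m q := sbtw_cyclic_left hqtm
  have h5 : sbtw t q p := sbtw_cyclic_left ht
  have h6 : sbtw t m p := sbtw_trans_right h4 h5
  exact h1 (sbtw_cyclic_left (sbtw_cyclic_left h6))

lemma my_shift {a b c d : S} (h1 : sbtw a b c) (h2 : sbtw a c d) : sbtw b c d := by
  have h3 : sbtw a b d := sbtw_trans_right h1 h2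
  rcases my_split h3 h2 (my_ne23 h1).symm with h4 | h4
  · exact absurd (sbtw_cyclic_left h4) (sbtw_asymm h1)
  · exact h4

lemma my_tri {e u v : S} (hu : u ≠ e) (hv : v ≠ e) :
    sbtw e u v ∨ u = v ∨ sbtw e v u := by
  by_cases huv : u = v
  · exact Or.inr (Or.inl huv)
  by_cases h : sbtw e u v
  · exact Or.inl h
  · exact Or.inr (Or.inr
      (sbtw_cyclic_left (sbtw_cyclic_left (my_flip (Ne.symm hv) (Ne.symm hu) huv h))))

/-- Pointwise covering for the five-point lemma. -/
lemma my_cover {a c b d e s t : S} (hq : Pos4 a c b d)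
    (hea : e ≠ a) (heb : e ≠ b) (hec : e ≠ c) (hed : e ≠ d)
    (hs : sbtw e s c) (ht : sbtw c t e) :
    (sbtw e s a ∧ sbtw a t e) ∨ (sbtw d s c ∧ sbtw c t d) ∨
    (sbtw e s b ∧ sbtw b t e) ∨ (sbtw a s b ∧ sbtw b t a) := by
  obtain ⟨hacb, hcbd, hbda, hdac⟩ := hq
  have ht' : sbtw e c t := sbtw_cyclic_left (sbtw_cyclic_left ht)
  have hse : s ≠ e := (my_ne12 hs).symm
  have hte : t ≠ e := my_ne23 ht
  have hab : a ≠ b := my_ne13 hacb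
  by_cases hp : sbtw a e b
  · rcases my_split hacb hp hec with h2 | h2
    · -- e ∈ ]a,c[ ; cut order at e : c < b < d < a
      have Rcb : sbtw e c b := my_shift h2 hacb
      have hacd : sbtw a c d := sbtw_cyclic_left hdac
      have Rcd : sbtw e c d := my_shift h2 hacd
      have Rbd : sbtw e b d := sbtw_trans_left Rcd hcbd
      have Rda : sbtw e d a := sbtw_cyclic_left (sbtw_trans_right h2 hacd)
      rcases my_tri hte (Ne.symm hed) with h3 | h3 | h3
      · exact Or.inr (Or.inl ⟨sbtw_cyclic_left (sbtw_cyclic_left (my_shift hs Rcd)),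
          my_shift ht' h3⟩)
      · subst h3
        have Rsb : sbtw e s b := sbtw_trans_right hs Rcb
        have Rba : sbtw e b a := sbtw_trans_right Rbd Rda
        exact Or.inr (Or.inr (Or.inr
          ⟨sbtw_cyclic_left (sbtw_cyclic_left (my_shift Rsb Rba)), hbda⟩))
      · have Rsb : sbtw e s b := sbtw_trans_right hs Rcb
        have Rbt : sbtw e b t := sbtw_trans_right Rbd h3
        exact Or.inr (Or.inr (Or.inl ⟨Rsb, sbtw_cyclic_left Rbt⟩))
    · -- e ∈ ]c,b[ ; cut order at e : b < d < a < c
      have Rbd : sbtw e b d := my_shift h2 hcbd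
      have hcba : sbtw c b a := sbtw_cyclic_left hacb
      have Rba : sbtw e b a := my_shift h2 hcba
      have Rda : sbtw e d a := sbtw_trans_left Rba hbda
      have Rbc : sbtw e b c := sbtw_cyclic_left h2
      have hbdc : sbtw b d c := sbtw_cyclic_left hcbd
      have hbac : sbtw b a c := sbtw_trans_left hbdc hdac
      have Rac : sbtw e a c := sbtw_trans_left Rbc hbac
      rcases my_tri hse (Ne.symm hea) with h3 | h3 | h3
      · exact Or.inl ⟨h3, sbtw_cyclic_left (sbtw_trans_right Rac ht')⟩
      · subst h3
        have Rdc : sbtw e d c := sbtw_trans_right Rda Rac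
        exact Or.inr (Or.inl ⟨hdac, sbtw_cyclic_left (my_shift Rdc ht')⟩)
      · have Rds : sbtw e d s := sbtw_trans_right Rda h3
        have Rdc : sbtw e d c := sbtw_trans_right Rda Rac
        exact Or.inr (Or.inl ⟨my_shift Rds hs, sbtw_cyclic_left (my_shift Rdc ht')⟩)
  · have hp' : sbtw b e a := my_flip hab (Ne.symm hea) heb hp
    rcases my_split hbda hp' hed with h2 | h2
    · -- e ∈ ]b,d[ ; cut order at e : d < a < c < b
      have Rdb : sbtw e d b := sbtw_cyclic_left h2
      have Rda : sbtw e d a := my_shift h2 hbda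
      have hced : sbtw c e d := sbtw_trans_left hcbd h2
      have Rdc : sbtw e d c := sbtw_cyclic_left hced
      have Rac : sbtw e a c := sbtw_trans_left Rdc hdac
      rcases my_tri hse (Ne.symm hea) with h3 | h3 | h3
      · exact Or.inl ⟨h3, sbtw_cyclic_left (sbtw_trans_right Rac ht')⟩
      · subst h3
        exact Or.inr (Or.inl ⟨hdac, sbtw_cyclic_left (my_shift Rdc ht')⟩)
      · have Rds : sbtw e d s := sbtw_trans_right Rda h3
        exact Or.inr (Or.inl ⟨my_shift Rds hs, sbtw_cyclic_left (my_shift Rdc ht')⟩)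
    · -- e ∈ ]d,a[ ; cut order at e : a < c < b < d
      have Rac : sbtw e a c := my_shift h2 hdac
      have Rab : sbtw e a b := sbtw_cyclic_left (sbtw_trans_left hbda h2)
      have Rcb : sbtw e c b := sbtw_trans_left Rab hacb
      have Rad : sbtw e a d := sbtw_cyclic_left h2
      have habd : sbtw a b d := sbtw_cyclic_left (sbtw_cyclic_left hbda)
      have Rbd : sbtw e b d := sbtw_trans_left Rad habd
      rcases my_tri hte (Ne.symm heb) with h3 | h3 | h3
      · have Rcd : sbtw e c d := sbtw_trans_right Rcb Rbd
        have Rtd : sbtw e t d := sbtw_trans_right h3 Rbd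
        exact Or.inr (Or.inl ⟨sbtw_cyclic_left (sbtw_cyclic_left (my_shift hs Rcd)),
          my_shift ht' Rtd⟩)
      · subst h3
        have Rcd : sbtw e c d := sbtw_trans_right Rcb Rbd
        exact Or.inr (Or.inl ⟨sbtw_cyclic_left (sbtw_cyclic_left (my_shift hs Rcd)), hcbd⟩)
      · have Rsb : sbtw e s b := sbtw_trans_right hs Rcb
        exact Or.inr (Or.inr (Or.inl ⟨Rsb, sbtw_cyclic_left h3⟩))

/-- Pointwise covering for the quadrilateral side lemma. -/
lemma my_side_ptwise {x1 x2 x3 x4 s t : S} (hq : Pos4 x1 x2 x3 x4)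
    (hs : sbtw x1 s x2) (ht : sbtw x2 t x1) :
    (sbtw x4 s x2 ∧ sbtw x2 t x4) ∨ (sbtw x1 s x3 ∧ sbtw x3 t x1) := by
  obtain ⟨h12, h23, h34, h41⟩ := hq
  have R34 : sbtw x1 x3 x4 := sbtw_cyclic_left (sbtw_cyclic_left h34)
  have R24 : sbtw x1 x2 x4 := sbtw_trans_right h12 R34
  have ht' : sbtw x1 x2 t := sbtw_cyclic_left (sbtw_cyclic_left ht)
  have hs4 : sbtw x4 s x2 := sbtw_cyclic_left (sbtw_cyclic_left (my_shift hs R24))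
  have hs3 : sbtw x1 s x3 := sbtw_trans_right hs h12
  rcases my_tri (my_ne23 ht) (my_ne12 h41) with h3 | h3 | h3
  · exact Or.inl ⟨hs4, my_shift ht' h3⟩
  · subst h3
    exact Or.inr ⟨hs3, h34⟩
  · exact Or.inr ⟨hs3, sbtw_cyclic_left (sbtw_trans_right R34 h3)⟩

end Helpers

section MeasureHelpers

variable {S : Type*} [CircularOrder S] [MeasurableSpace S]

lemma my_flipShort (μ : Measure (S × S)) (hflip : ∀ A B : Set S, μ (A ×ˢ B) = μ (B ×ˢ A))
    {a b : S} (h : SomewhatShort μ a b) : SomewhatShort μ b a := by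
  unfold SomewhatShort at *
  rw [hflip]; exact h

lemma my_side (μ : Measure (S × S)) (hflip : ∀ A B : Set S, μ (A ×ˢ B) = μ (B ×ˢ A))
    {x1 x2 x3 x4 : S} (hq : Pos4 x1 x2 x3 x4)
    (S13 : SomewhatShort μ x1 x3) (S24 : SomewhatShort μ x2 x4) :
    SomewhatShort μ x1 x2 := by
  have hsub : (oarc x1 x2) ×ˢ (oarc x2 x1) ⊆
      ((oarc x4 x2) ×ˢ (oarc x2 x4)) ∪ ((oarc x1 x3) ×ˢ (oarc x3 x1)) := by
    rintro ⟨s, t⟩ ⟨hs, ht⟩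
    rcases my_side_ptwise hq hs ht with ⟨h1, h2⟩ | ⟨h1, h2⟩
    · exact Or.inl ⟨h1, h2⟩
    · exact Or.inr ⟨h1, h2⟩
  refine measure_mono_null hsub (measure_union_null ?_ S13)
  exact my_flipShort μ hflip S24

lemma my_five (μ : Measure (S × S)) (hflip : ∀ A B : Set S, μ (A ×ˢ B) = μ (B ×ˢ A))
    {a c b d e : S} (hq : Pos4 a c b d)
    (hea : e ≠ a) (heb : e ≠ b) (hec : e ≠ c) (hed : e ≠ d)
    (Sab : SomewhatShort μ a b) (Scd : SomewhatShort μ c d)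
    (Sea : SomewhatShort μ e a) (Seb : SomewhatShort μ e b) :
    SomewhatShort μ e c := by
  have hsub : (oarc e c) ×ˢ (oarc c e) ⊆
      ((oarc e a) ×ˢ (oarc a e)) ∪ (((oarc d c) ×ˢ (oarc c d)) ∪
        (((oarc e b) ×ˢ (oarc b e)) ∪ ((oarc a b) ×ˢ (oarc b a)))) := by
    rintro ⟨s, t⟩ ⟨hs, ht⟩
    rcases my_cover hq hea heb hec hed hs ht with ⟨h1, h2⟩ | ⟨h1, h2⟩ | ⟨h1, h2⟩ | ⟨h1, h2⟩
    · exact Or.inl ⟨h1, h2⟩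
    · exact Or.inr (Or.inl ⟨h1, h2⟩)
    · exact Or.inr (Or.inr (Or.inl ⟨h1, h2⟩))
    · exact Or.inr (Or.inr (Or.inr ⟨h1, h2⟩))
  refine measure_mono_null hsub
    (measure_union_null Sea (measure_union_null ?_ (measure_union_null Seb Sab)))
  exact my_flipShort μ hflip Scd

lemma my_step (μ : Measure (S × S)) (hflip : ∀ A B : Set S, μ (A ×ˢ B) = μ (B ×ˢ A))
    {a c b d e : S} (hq : Pos4 a c b d)
    (Sab : SomewhatShort μ a b) (Scd : SomewhatShort μ c d)
    (iha : e ≠ a → SomewhatShort μ e a) (ihb : e ≠ b → SomewhatShort μ e b) :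
    (e ≠ c → SomewhatShort μ e c) ∧ (e ≠ d → SomewhatShort μ e d) := by
  obtain ⟨hacb, hcbd, hbda, hdac⟩ := hq
  by_cases hea : e = a
  · subst hea
    refine ⟨fun _ => ?_, fun _ => ?_⟩
    · exact my_side μ hflip ⟨hacb, hcbd, hbda, hdac⟩ Sab Scd
    · exact my_flipShort μ hflip
        (my_side μ hflip ⟨hdac, hacb, hcbd, hbda⟩ (my_flipShort μ hflip Scd) Sab)
  by_cases heb : e = b
  · subst heb
    refine ⟨fun _ => ?_, fun _ => ?_⟩
    · exact my_flipShort μ hflip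
        (my_side μ hflip ⟨hcbd, hbda, hdac, hacb⟩ Scd (my_flipShort μ hflip Sab))
    · exact my_side μ hflip ⟨hbda, hdac, hacb, hcbd⟩ (my_flipShort μ hflip Sab)
        (my_flipShort μ hflip Scd)
  by_cases hec : e = c
  · exact ⟨fun h => absurd hec h, fun _ => hec ▸ Scd⟩
  by_cases hed : e = d
  · exact ⟨fun _ => hed ▸ my_flipShort μ hflip Scd, fun h => absurd hed h⟩
  · have Sea := iha hea
    have Seb := ihb heb
    exact ⟨fun _ => my_five μ hflip ⟨hacb, hcbd, hbda, hdac⟩ hea heb hec hed Sab Scd Sea Seb,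
      fun _ => my_five μ hflip ⟨hbda, hdac, hacb, hcbd⟩ heb hea hed hec
        (my_flipShort μ hflip Sab) (my_flipShort μ hflip Scd) Seb Sea⟩

end MeasureHelpers

/-- given a chain of pairwise consecutive crossing `μ`-somewhat short
geodesics `g_k = (x_k, y_k)`, `k = 0, …, r+1`, with `(x_k, x_{k+1}, y_k, y_{k+1})`
positively oriented for `k ≤ r`, every pair `(x₀,x_k)`, `(x₀,y_k)`, `(y₀,x_k)`,
`(y₀,y_k)` that is defined (i.e. has distinct entries) is `μ`-somewhat short. -/
theorem chain_somewhat_short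
    {S : Type*} [CircularOrder S] [MeasurableSpace S]
    (μ : Measure (S × S))
    (hflip : ∀ A B : Set S, μ (A ×ˢ B) = μ (B ×ˢ A))
    (r : ℕ) (x y : ℕ → S)
    (hss : ∀ k ≤ r + 1, SomewhatShort μ (x k) (y k))
    (hpos : ∀ k ≤ r, Pos4 (x k) (x (k + 1)) (y k) (y (k + 1))) :
    ∀ k ≤ r + 1,
      (x 0 ≠ x k → SomewhatShort μ (x 0) (x k)) ∧
      (x 0 ≠ y k → SomewhatShort μ (x 0) (y k)) ∧
      (y 0 ≠ x k → SomewhatShort μ (y 0) (x k)) ∧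
      (y 0 ≠ y k → SomewhatShort μ (y 0) (y k)) := by
  intro k
  induction k with
  | zero =>
    intro _
    exact ⟨fun h => absurd rfl h, fun _ => hss 0 (by omega),
      fun _ => my_flipShort μ hflip (hss 0 (by omega)), fun h => absurd rfl h⟩
  | succ n ih =>
    intro hk
    have hn : n ≤ r := by omega
    have hn1 : n ≤ r + 1 := by omega
    obtain ⟨i1, i2, i3, i4⟩ := ih hn1
    have quad := hpos n hn
    have Sab := hss n hn1
    have Scd := hss (n + 1) hk
    have s1 := my_step μ hflip quad Sab Scd i1 i2
    have s2 := my_step μ hflip quad Sab Scd i3 i4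
    exact ⟨s1.1, s1.2, s2.1, s2.2⟩
end

section
/- Let μ and λ be geodesic currents on a finite-area hyperbolic surface with i(μ, λ) = 0, and suppose (a,b) ∈ supp(λ). Then the geodesic (a,b) is μ-somewhat short, i.e. μ(]a,b[ × ]b,a[) = 0. -/
open MeasureTheory Set ENNReal

instance : Fact ((0:ℝ) < 1) := ⟨one_pos⟩

/-- The circle `∂H² = S¹`, as `ℝ/ℤ`. -/
abbrev Circ := AddCircle (1 : ℝ)

/-- Two geodesics, given as ordered pairs of endpoints, cross. -/
def CrossesP {S : Type*} [CircularOrder S] (p q : S × S) : Prop :=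
  Xor' (q.1 ∈ oarc p.1 p.2) (q.2 ∈ oarc p.1 p.2)

/-- The support of a measure: points all of whose open neighborhoods have positive
measure. -/
def msupport (ν : Measure (Circ × Circ)) : Set (Circ × Circ) :=
  {p | ∀ U : Set (Circ × Circ), IsOpen U → p ∈ U → 0 < ν U}

/-! If `μ × ν` does not charge crossing pairs, then `μ` does not charge any box of geodesics
all crossing a box of positive `ν`-measure. A geodesic `(u, v)` crossing `(a, b)` lies in an open
box `]y,z[ × ]t,x[` whose partner box `]x,y[ × ]z,t[` is an open neighbourhood of
`(a, b) ∈ supp ν`, so `]a,b[ × ]b,a[` is locally `μ`-null, hence `μ`-null by second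
countability. -/

section CircularOrder

variable {S : Type*}

theorem sbtw_of_mem_consecutive_arcs [CircularPreorder S] {x y z t p q r : S}
    (hxyz : sbtw x y z) (hztx : sbtw z t x)
    (hp : sbtw y p z) (hq : sbtw z q t) (hr : sbtw t r x) : sbtw p q r := by
  have hzrp : sbtw z r p := sbtw_trans_right (hztx.trans_left hr) (hxyz.trans_left hp).cyclic_right
  have hzqr : sbtw z q r := sbtw_trans_right hq (sbtw_trans_right hr hztx.cyclic_left).cyclic_right
  exact hzrp.cyclic_left.cyclic_left.trans_left hzqr

theorem crossesP_of_mem_prod_oarc [CircularOrder S] {x y z t : S}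
    (hxyz : sbtw x y z) (hztx : sbtw z t x) {p q : S × S}
    (hp : p ∈ oarc y z ×ˢ oarc t x) (hq : q ∈ oarc x y ×ˢ oarc z t) : CrossesP p q :=
  Or.inr ⟨sbtw_of_mem_consecutive_arcs hxyz hztx hp.1 hq.2 hp.2,
    sbtw_asymm (sbtw_of_mem_consecutive_arcs hztx hxyz hp.2 hq.1 hp.1)⟩

end CircularOrder

theorem sbtw_coe_of_lt {X Y Z : ℝ} (hXY : X < Y) (hYZ : Y < Z) (hZX : Z < X + 1) :
    sbtw (X : Circ) Y Z := by
  rw [sbtw_iff_not_btw, QuotientAddGroup.btw_coe_iff, not_le]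
  have hX : toIocMod one_pos Z X = X + 1 :=
    (toIocMod_eq_iff one_pos).mpr ⟨⟨hZX, by linarith⟩, ⟨-1, by simp⟩⟩
  have hY : toIcoMod one_pos Z Y = Y + 1 :=
    (toIcoMod_eq_iff one_pos).mpr ⟨⟨by linarith, by linarith⟩, ⟨-1, by simp⟩⟩
  rw [hX, hY]
  linarith

theorem exists_coe_eq_of_ne {x y : Circ} (h : x ≠ y) :
    ∃ X Y : ℝ, X < Y ∧ Y < X + 1 ∧ (X : Circ) = x ∧ (Y : Circ) = y := by
  obtain ⟨X, rfl⟩ := QuotientAddGroup.mk_surjective x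
  have hY := (AddCircle.equivIco 1 X y).2
  refine ⟨X, AddCircle.equivIco 1 X y, hY.1.lt_of_ne ?_, hY.2, rfl, AddCircle.coe_equivIco⟩
  intro hXY
  exact h (by rw [hXY, AddCircle.coe_equivIco])

theorem oarc_coe_eq_image {X Y : ℝ} (hXY : X < Y) (hYX : Y < X + 1) :
    oarc (X : Circ) Y = (↑) '' Ioo X Y := by
  refine Subset.antisymm (fun u hu => ?_) ?_
  · have hU := (AddCircle.equivIco 1 X u).2
    set U : ℝ := ↑(AddCircle.equivIco 1 X u)
    have hUu : (U : Circ) = u := AddCircle.coe_equivIco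
    replace hu : sbtw (X : Circ) U Y := hUu ▸ hu
    refine ⟨U, ⟨hU.1.lt_of_ne fun hXU => ?_, lt_of_not_ge fun hYU => ?_⟩, hUu⟩
    · rw [← hXU] at hu
      exact sbtw_irrefl_left hu
    · rcases hYU.eq_or_lt with hYU | hYU
      · rw [hYU] at hu
        exact sbtw_irrefl_right hu
      · have := sbtw_coe_of_lt hYU hU.2 (by linarith)
        rw [AddCircle.coe_add_period] at this
        exact sbtw_asymm hu this
  · rintro _ ⟨U, hU, rfl⟩
    exact sbtw_coe_of_lt hU.1 hU.2 (by linarith)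

theorem isOpen_oarc (x y : Circ) : IsOpen (oarc x y) := by
  rcases eq_or_ne x y with rfl | h
  · convert isOpen_empty
    exact eq_empty_of_forall_notMem fun z (h : sbtw x z x) => sbtw_irrefl_left_right h
  obtain ⟨X, Y, hXY, hYX, rfl, rfl⟩ := exists_coe_eq_of_ne h
  rw [oarc_coe_eq_image hXY hYX]
  exact QuotientAddGroup.isOpenMap_coe _ isOpen_Ioo

theorem exists_separating_quadruple {a b u v : Circ} (hu : u ∈ oarc a b) (hv : v ∈ oarc b a) :
    ∃ x y z t : Circ, sbtw x y z ∧ sbtw z t x ∧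
      (a, b) ∈ oarc x y ×ˢ oarc z t ∧ (u, v) ∈ oarc y z ×ˢ oarc t x := by
  have hab : a ≠ b := by
    rintro rfl
    exact sbtw_irrefl_left_right (show sbtw a u a from hu)
  obtain ⟨A, B, hAB, hBA, rfl, rfl⟩ := exists_coe_eq_of_ne hab
  obtain ⟨U, ⟨hAU, hUB⟩, rfl⟩ := oarc_coe_eq_image hAB hBA ▸ hu
  rw [← AddCircle.coe_add_period 1 A, oarc_coe_eq_image hBA (by linarith)] at hv
  obtain ⟨V, ⟨hBV, hVA⟩, rfl⟩ := hv
  -- `x` is lifted to `]V - 1, A[`, so that `x, y, z, t` lift into one period in increasing order.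
  refine ⟨↑((V + A - 1) / 2), ↑((A + U) / 2), ↑((U + B) / 2), ↑((B + V) / 2), ?_,
    (sbtw_coe_of_lt ?_ ?_ ?_).cyclic_left, ⟨?_, ?_⟩, ?_, (sbtw_coe_of_lt ?_ ?_ ?_).cyclic_left⟩
  all_goals first
    | exact sbtw_coe_of_lt (by linarith) (by linarith) (by linarith)
    | linarith

theorem measure_eq_zero_of_prod_subset {α β : Type*} [MeasurableSpace α] [MeasurableSpace β]
    {μ : Measure α} {ν : Measure β} [SFinite ν] {D : Set (α × β)} (hD : μ.prod ν D = 0)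
    {s : Set α} {t : Set β} (hst : s ×ˢ t ⊆ D) (ht : ν t ≠ 0) : μ s = 0 := by
  have := measure_mono_null hst hD
  rw [Measure.prod_prod, mul_eq_zero] at this
  exact this.resolve_right ht

theorem measure_oarc_prod_oarc_eq_zero {μ ν : Measure (Circ × Circ)} [SFinite ν]
    (hD : (μ.prod ν) {pq : (Circ × Circ) × (Circ × Circ) | CrossesP pq.1 pq.2} = 0)
    {a b x y z t : Circ} (hab : (a, b) ∈ msupport ν) (hxyz : sbtw x y z) (hztx : sbtw z t x)
    (hab' : (a, b) ∈ oarc x y ×ˢ oarc z t) : μ (oarc y z ×ˢ oarc t x) = 0 :=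
  measure_eq_zero_of_prod_subset hD (fun _ hpq => crossesP_of_mem_prod_oarc hxyz hztx hpq.1 hpq.2)
    (hab _ ((isOpen_oarc x y).prod (isOpen_oarc z t)) hab').ne'

theorem somewhat_short_of_zero_intersection_general
    (μ ν : Measure (Circ × Circ)) [SFinite ν]
    (hD : (μ.prod ν) {pq : (Circ × Circ) × (Circ × Circ) | CrossesP pq.1 pq.2} = 0)
    (a b : Circ) (hab : (a, b) ∈ msupport ν) :
    μ ((oarc a b) ×ˢ (oarc b a)) = 0 := by
  refine measure_null_of_locally_null _ fun w hw => ?_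
  obtain ⟨x, y, z, t, hxyz, hztx, hab', hw'⟩ := exists_separating_quadruple hw.1 hw.2
  refine ⟨oarc y z ×ˢ oarc t x, mem_nhdsWithin_of_mem_nhds ?_,
    measure_oarc_prod_oarc_eq_zero hD hab hxyz hztx hab'⟩
  exact ((isOpen_oarc y z).prod (isOpen_oarc t x)).mem_nhds hw'

/-- if the geodesic currents `μ` and `ν` have vanishing intersection
number — i.e. `μ × ν` gives zero mass to the set of crossing pairs of geodesics —
and `(a,b) ∈ supp ν`, then `(a,b)` is `μ`-somewhat short. -/
theorem somewhat_short_of_zero_intersection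
    (μ ν : Measure (Circ × Circ)) [SFinite ν]
    (hflip : ∀ A B : Set Circ, μ (A ×ˢ B) = μ (B ×ˢ A))
    (hD : (μ.prod ν) {pq : (Circ × Circ) × (Circ × Circ) | CrossesP pq.1 pq.2} = 0)
    (a b : Circ) (hne : a ≠ b) (hab : (a, b) ∈ msupport ν) :
    μ ((oarc a b) ×ˢ (oarc b a)) = 0 :=
  somewhat_short_of_zero_intersection_general μ ν hD a b hab
end

section
/- Let Λ̃ be a geodesic lamination on H² (a closed set of pairwise non-crossing geodesics, viewed as pairs of distinct boundary points) which is the lift of a minimal lamination on a surface that is not a single closed geodesic. Then for every point a ∈ ∂H² and every positively oriented triple (a,c,d), the set of leaves of Λ̃ of the form (a, x) with x ∈ ]c,d[ contains at most two elements. -/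
open Set

/-! If `(a,x)`, `(a,y)`, `(a,z)` are leaves with `a, x, y, z` in this cyclic order, approximate
`(a,y)` by a leaf `(b,e)` with `b ≠ a`, `b ∈ ]z,x[` and `e ∈ ]x,z[`. Whichever side of `a` the
point `b` lies on, the endpoints of `(b,e)` are linked with those of `(a,x)` or of `(a,z)`. -/

section CircularOrder

variable {S : Type*} [CircularOrder S] {a b c d : S}

theorem sbtw_of_btw_of_ne (h : btw a b c) (hab : a ≠ b) (hbc : b ≠ c) (hca : c ≠ a) :
    sbtw a b c :=
  sbtw_of_btw_not_btw h fun h' => by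
    rcases h.antisymm h' with rfl | rfl | rfl <;> contradiction

theorem sbtw_or_sbtw_of_ne (hb : b ≠ a) (hc : c ≠ a) (hbc : b ≠ c) :
    sbtw a b c ∨ sbtw a c b := by
  rcases btw_total a b c with h | h
  · exact .inl (sbtw_of_btw_of_ne h hb.symm hbc hc)
  · exact .inr (sbtw_of_btw_of_ne h.cyclic_left.cyclic_left hc.symm hbc.symm hb)

theorem sbtw_or_sbtw_of_sbtw_of_ne (hb : sbtw a b d) (hc : sbtw a c d) (hbc : c ≠ b) :
    sbtw a c b ∨ sbtw b c d := by
  have hca : c ≠ a := by rintro rfl; exact sbtw_irrefl_left hc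
  have hab : b ≠ a := by rintro rfl; exact sbtw_irrefl_left hb
  rcases btw_total a c b with h | h
  · exact .inl (sbtw_of_btw_of_ne h hca.symm hbc hab)
  · have hcab : sbtw c a b := (sbtw_of_btw_of_ne h hbc.symm hca hab.symm).cyclic_left
    exact .inr (sbtw_trans_right (sbtw_cyclic_left hc) hcab).cyclic_right

theorem crossesP_of_sbtw (h₁ : sbtw a b c) (h₂ : sbtw a c d) : CrossesP (a, c) (b, d) :=
  .inl ⟨h₁, sbtw_asymm (sbtw_cyclic_left h₂)⟩

theorem crossesP_swap_right {p q : S × S} : CrossesP p q.swap ↔ CrossesP p q :=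
  Or.comm

theorem not_sbtw_of_mem_closure {Λ : Set (S × S)} [TopologicalSpace S]
    (hopen : ∀ u v : S, IsOpen (cIoo u v)) (hdisj : ∀ p ∈ Λ, ∀ q ∈ Λ, ¬ CrossesP p q)
    {a x y z : S} (hx : (a, x) ∈ Λ) (hy : (a, y) ∈ closure (Λ ∩ {q | q.1 ≠ a}))
    (hz : (a, z) ∈ Λ) (hxy : sbtw a x y) : ¬ sbtw a y z := by
  intro hyz
  have hxz : sbtw a x z := sbtw_trans_right hxy hyz
  have hxyz : sbtw x y z :=
    (sbtw_trans_right (sbtw_cyclic_left hyz) hxy.cyclic_right).cyclic_right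
  obtain ⟨⟨b, e⟩, ⟨hb, he⟩, hbe, hba⟩ := mem_closure_iff.1 hy (cIoo z x ×ˢ cIoo x z)
    ((hopen z x).prod (hopen x z)) ⟨sbtw_cyclic_right hxz, hxyz⟩
  change sbtw z b x at hb
  change sbtw x e z at he
  rcases sbtw_or_sbtw_of_sbtw_of_ne (sbtw_cyclic_right hxz) hb hba with hzba | habx
  · have haez : sbtw a e z := hxz.trans_left he
    have hazb : sbtw a z b := hzba.cyclic_left.cyclic_left
    exact hdisj _ hz _ hbe (crossesP_swap_right.1 (crossesP_of_sbtw haez hazb))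
  · have haxe : sbtw a x e := (sbtw_trans_right he (sbtw_cyclic_left hxz)).cyclic_right
    exact hdisj _ hx _ hbe (crossesP_of_sbtw habx haxe)

end CircularOrder

section AddCircle

variable {α : Type*} [AddCommGroup α] [LinearOrder α] [IsOrderedAddMonoid α] [Archimedean α]
  {p : α} [hp : Fact (0 < p)]

theorem QuotientAddGroup.sbtw_coe_iff {s x t : α} :
    sbtw (s : α ⧸ AddSubgroup.zmultiples p) x t ↔ toIocMod hp.out s x < toIcoMod hp.out s t := by
  rw [sbtw_iff_not_btw, btw_cyclic, btw_coe_iff, not_le]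

theorem AddCircle.isOpen_cIoo [TopologicalSpace α] [OrderTopology α] (a b : AddCircle p) :
    IsOpen (cIoo a b) := by
  induction a using QuotientAddGroup.induction_on with | H s => ?_
  induction b using QuotientAddGroup.induction_on with | H t => ?_
  refine isOpen_iff_mem_nhds.2 fun x hx => ?_
  rw [mem_cIoo] at hx
  have hxs : x ≠ s := by rintro rfl; exact sbtw_irrefl_left hx
  have hlt : (equivIoc p s x : α) < toIcoMod hp.out s t := by
    induction x using QuotientAddGroup.induction_on with
    | H x => exact QuotientAddGroup.sbtw_coe_iff.1 hx
  have hcont : ContinuousAt (fun y => (equivIoc p s y : α)) x :=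
    continuous_subtype_val.continuousAt.comp (continuousAt_equivIoc p s hxs)
  filter_upwards [hcont.eventually_lt continuousAt_const hlt] with y hy
  induction y using QuotientAddGroup.induction_on with
  | H y => exact QuotientAddGroup.sbtw_coe_iff.2 hy

end AddCircle

theorem at_most_two_leaves_from_a_point_general
    (Λ : Set (Circ × Circ))
    (hdisj : ∀ p ∈ Λ, ∀ q ∈ Λ, ¬ CrossesP p q)
    (happrox : ∀ p ∈ Λ, ∀ U : Set (Circ × Circ), IsOpen U → p ∈ U →
      ∃ q ∈ Λ ∩ U, q.1 ≠ p.1 ∧ q.2 ≠ p.2)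
    (a c d : Circ) (hacd : sbtw a c d) :
    ∀ c₁ ∈ oarc c d, ∀ c₂ ∈ oarc c d, ∀ c₃ ∈ oarc c d,
      (a, c₁) ∈ Λ → (a, c₂) ∈ Λ → (a, c₃) ∈ Λ →
      c₁ = c₂ ∨ c₁ = c₃ ∨ c₂ = c₃ := by
  intro c₁ h₁ c₂ h₂ c₃ h₃ hL₁ hL₂ hL₃
  have hne : ∀ x ∈ oarc c d, x ≠ a := fun x hx hxa =>
    sbtw_asymm hacd (hxa ▸ sbtw_cyclic_right hx)
  have hclosure : ∀ {y}, (a, y) ∈ Λ → (a, y) ∈ closure (Λ ∩ {q | q.1 ≠ a}) := fun hy =>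
    mem_closure_iff.2 fun U hU hyU =>
      let ⟨q, ⟨hq, hqU⟩, hq₁, _⟩ := happrox _ hy U hU hyU
      ⟨q, hqU, hq, hq₁⟩
  have key : ∀ {x y z}, (a, x) ∈ Λ → (a, y) ∈ Λ → (a, z) ∈ Λ → sbtw a x y → ¬ sbtw a y z :=
    fun hx hy hz => not_sbtw_of_mem_closure AddCircle.isOpen_cIoo hdisj hx (hclosure hy) hz
  by_contra! ⟨h₁₂, h₁₃, h₂₃⟩
  -- every orientation of a triangle contains a directed path of length two
  rcases sbtw_or_sbtw_of_ne (hne _ h₁) (hne _ h₂) h₁₂ with o₁₂ | o₂₁ <;>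
  rcases sbtw_or_sbtw_of_ne (hne _ h₂) (hne _ h₃) h₂₃ with o₂₃ | o₃₂ <;>
  rcases sbtw_or_sbtw_of_ne (hne _ h₁) (hne _ h₃) h₁₃ with o₁₃ | o₃₁ <;>
    first
    | exact key hL₁ hL₂ hL₃ o₁₂ o₂₃ | exact key hL₁ hL₃ hL₂ o₁₃ o₃₂
    | exact key hL₂ hL₁ hL₃ o₂₁ o₁₃ | exact key hL₂ hL₃ hL₁ o₂₃ o₃₁
    | exact key hL₃ hL₁ hL₂ o₃₁ o₁₂ | exact key hL₃ hL₂ hL₁ o₃₂ o₂₁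

/-- let `Λ` be a lamination (a closed set of pairwise non-crossing
geodesics) such that every leaf is approximated by leaves with distinct endpoints
(the consequence of minimality, no closed-geodesic component). Then for every point
`a` and positively oriented triple `(a,c,d)`, there are at most two leaves of the
form `(a,x)` with `x ∈ ]c,d[`. -/
theorem at_most_two_leaves_from_a_point
    (Λ : Set (Circ × Circ)) (hclosed : IsClosed Λ)
    (hdisj : ∀ p ∈ Λ, ∀ q ∈ Λ, ¬ CrossesP p q)
    (happrox : ∀ p ∈ Λ, ∀ U : Set (Circ × Circ), IsOpen U → p ∈ U →
      ∃ q ∈ Λ ∩ U, q.1 ≠ p.1 ∧ q.2 ≠ p.2)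
    (a c d : Circ) (hacd : sbtw a c d) :
    ∀ c₁ ∈ oarc c d, ∀ c₂ ∈ oarc c d, ∀ c₃ ∈ oarc c d,
      (a, c₁) ∈ Λ → (a, c₂) ∈ Λ → (a, c₃) ∈ Λ →
      c₁ = c₂ ∨ c₁ = c₃ ∨ c₂ = c₃ :=
  at_most_two_leaves_from_a_point_general Λ hdisj happrox a c d hacd
end

section
/- Let μ be a finite-on-compacts Borel measure on the space of pairs of distinct points of the circle such that μ({a} × I) = 0 for every point a and every arc I with a ∉ closure(I), and symmetrically μ(I × {a}) = 0. Then the function (a,b,c,d) ↦ μ([a,b] × [c,d]) is continuous on the set of positively oriented 4-tuples (a,b,c,d) (i.e. configurations where the closed arcs [a,b] and [c,d] are disjoint). -/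
open MeasureTheory Set ENNReal

/-- The closed arc `[a,b]`. -/
def carc {S : Type*} [CircularOrder S] (a b : S) : Set S :=
  insert a (insert b (oarc a b))

lemma exists_rep (w : ℝ) (z : Circ) : ∃ x ∈ Ico w (w+1), (x:Circ) = z := by
  induction z using QuotientAddGroup.induction_on with
  | H x =>
    refine ⟨toIcoMod one_pos w x, ?_, ?_⟩
    · simpa using toIcoMod_mem_Ico one_pos w x
    · have h : x - toIcoMod one_pos w x = toIcoDiv one_pos w x • (1:ℝ) := self_sub_toIcoMod one_pos w x
      rw [QuotientAddGroup.eq]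
      rw [AddSubgroup.mem_zmultiples_iff]
      refine ⟨toIcoDiv one_pos w x, ?_⟩
      rw [← h]; ring

lemma sbtw_coe {x y z : ℝ} (hy : y ∈ Ioo x (x+1)) (hz : z ∈ Ioo x (x+1)) :
    sbtw (x:Circ) (y:Circ) (z:Circ) ↔ y < z := by
  rw [sbtw_iff_not_btw, QuotientAddGroup.btw_coe_iff]
  have hIoc : toIocMod one_pos z x = x + 1 := by
    rw [toIocMod_eq_iff]
    exact ⟨⟨hz.2, by linarith [hz.1]⟩, ⟨-1, by simp⟩⟩
  rw [hIoc]
  rcases le_or_gt z y with h | h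
  · have : toIcoMod one_pos z y = y := (toIcoMod_eq_self one_pos).2 ⟨h, by linarith [hy.1, hz.1, hz.2, hy.2]⟩
    rw [this]
    constructor
    · intro hn; exact absurd (by linarith [hy.2] : y ≤ x + 1) hn
    · intro h'; linarith
  · have : toIcoMod one_pos z y = y + 1 := by
      rw [toIcoMod_eq_iff]
      exact ⟨⟨by linarith [hy.1, hz.2], by linarith⟩, ⟨-1, by simp⟩⟩
    rw [this]
    constructor
    · intro _; exact h
    · intro _ hc; linarith [hy.1]

lemma injOn_coe (w : ℝ) : InjOn ((↑) : ℝ → Circ) (Ico w (w+1)) := fun x hx y hy h =>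
  (AddCircle.coe_eq_coe_iff_of_mem_Ico hx hy).1 h

lemma oarc_coe {s t : ℝ} (hst : s < t) (hts : t < s + 1) :
    oarc (s : Circ) (t : Circ) = ((↑) : ℝ → Circ) '' Ioo s t := by
  ext z
  obtain ⟨y, hy, rfl⟩ := exists_rep s z
  rcases eq_or_lt_of_le hy.1 with h | h
  · subst h
    simp only [oarc, mem_setOf_eq, mem_image]
    constructor
    · intro hs'; exact absurd hs' sbtw_irrefl_left
    · rintro ⟨y', hy', he⟩
      have : y' = s := (AddCircle.coe_eq_coe_iff_of_mem_Ico
        (⟨hy'.1.le, hy'.2.trans hts⟩ : y' ∈ Ico s (s+1)) (by constructor <;> [linarith; linarith])).1 he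
      exact absurd (this ▸ hy'.1) (lt_irrefl s)
  · have hyI : y ∈ Ioo s (s+1) := ⟨h, hy.2⟩
    simp only [oarc, mem_setOf_eq]
    rw [sbtw_coe hyI ⟨hst, hts⟩]
    constructor
    · intro hyt; exact ⟨y, ⟨h, hyt⟩, rfl⟩
    · rintro ⟨y', hy', he⟩
      have : y' = y := (AddCircle.coe_eq_coe_iff_of_mem_Ico
        (⟨hy'.1.le, by linarith [hy'.2]⟩ : y' ∈ Ico s (s+1)) hy).1 he
      exact this ▸ hy'.2

lemma carc_coe {s t : ℝ} (hst : s < t) (hts : t < s + 1) :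
    carc (s : Circ) (t : Circ) = ((↑) : ℝ → Circ) '' Icc s t := by
  rw [carc, oarc_coe hst hts, ← image_insert_eq, ← image_insert_eq,
    Set.Ioo_insert_right hst, Set.Ioc_insert_left hst.le]

lemma pos4_lift {a b c d : Circ} (h : Pos4 a b c d) :
    ∃ α β γ δ : ℝ, a = (α:Circ) ∧ b = (β:Circ) ∧ c = (γ:Circ) ∧ d = (δ:Circ) ∧
      α < β ∧ β < γ ∧ γ < δ ∧ δ < α + 1 := by
  obtain ⟨α, -, rfl⟩ := exists_rep 0 a
  obtain ⟨β, hβ, rfl⟩ := exists_rep α b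
  obtain ⟨γ, hγ, rfl⟩ := exists_rep α c
  obtain ⟨δ, hδ, rfl⟩ := exists_rep α d
  have hβ' : β ∈ Ioo α (α+1) := by
    rcases eq_or_lt_of_le hβ.1 with hh | hh
    · exact absurd (hh ▸ h.1) sbtw_irrefl_left
    · exact ⟨hh, hβ.2⟩
  have hγ' : γ ∈ Ioo α (α+1) := by
    rcases eq_or_lt_of_le hγ.1 with hh | hh
    · exact absurd (hh ▸ h.1) sbtw_irrefl_left_right
    · exact ⟨hh, hγ.2⟩
  have hδ' : δ ∈ Ioo α (α+1) := by
    rcases eq_or_lt_of_le hδ.1 with hh | hh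
    · exact absurd (hh ▸ h.2.2.1) sbtw_irrefl_right
    · exact ⟨hh, hδ.2⟩
  refine ⟨α, β, γ, δ, rfl, rfl, rfl, rfl, hβ'.1, ?_, ?_, hδ'.2⟩
  · exact (sbtw_coe hβ' hγ').1 h.1
  · exact (sbtw_coe hγ' hδ').1 (sbtw_cyclic.mp h.2.2.1)

lemma iInter_image {w : ℝ} {C : ℕ → Set ℝ} (hC : ∀ n, C n ⊆ Ico w (w+1)) :
    ⋂ n, ((↑) : ℝ → Circ) '' C n = ((↑) : ℝ → Circ) '' (⋂ n, C n) := by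
  apply Subset.antisymm
  · intro z hz
    obtain ⟨y, hy, rfl⟩ := mem_iInter.1 hz 0
    refine ⟨y, mem_iInter.2 fun n => ?_, rfl⟩
    obtain ⟨y', hy', he⟩ := mem_iInter.1 hz n
    rwa [injOn_coe w (hC n hy') (hC 0 hy) he] at hy'
  · exact image_iInter_subset _ _

lemma real_iInter {u v ρ : ℝ} (huv : u ≤ v) (hρ : 0 < ρ) :
    ⋂ n : ℕ, Icc (u - ρ/(n+1)) (v + ρ/(n+1)) = Icc u v := by
  apply Subset.antisymm
  · intro x hx
    simp only [mem_iInter, mem_Icc] at hx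
    have ht : Filter.Tendsto (fun n : ℕ => ρ/(n+1)) Filter.atTop (nhds 0) := by
      have h0 := (tendsto_const_div_atTop_nhds_zero_nat ρ).comp (Filter.tendsto_add_atTop_nat 1)
      convert h0 using 2 with n
      simp [Function.comp]
    constructor
    · have h1 : Filter.Tendsto (fun n : ℕ => u - ρ/(n+1)) Filter.atTop (nhds u) := by
        simpa using tendsto_const_nhds.sub ht
      exact le_of_tendsto h1 (Filter.Eventually.of_forall fun n => (hx n).1)
    · have h1 : Filter.Tendsto (fun n : ℕ => v + ρ/(n+1)) Filter.atTop (nhds v) := by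
        simpa using tendsto_const_nhds.add ht
      exact ge_of_tendsto h1 (Filter.Eventually.of_forall fun n => (hx n).2)
  · intro x hx
    refine mem_iInter.2 fun n => ⟨?_, ?_⟩
    · have : (0:ℝ) < ρ/(n+1) := by positivity
      linarith [hx.1]
    · have : (0:ℝ) < ρ/(n+1) := by positivity
      linarith [hx.2]

lemma real_iUnion {u v ρ : ℝ} (hρ : 0 < ρ) :
    ⋃ n : ℕ, Icc (u + ρ/(n+1)) (v - ρ/(n+1)) = Ioo u v := by
  apply Subset.antisymm
  · intro x hx
    obtain ⟨n, hn⟩ := mem_iUnion.1 hx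
    have : (0:ℝ) < ρ/(n+1) := by positivity
    exact ⟨by linarith [hn.1], by linarith [hn.2]⟩
  · intro x hx
    set m := min (x - u) (v - x) with hm
    have hm0 : 0 < m := lt_min (by linarith [hx.1]) (by linarith [hx.2])
    obtain ⟨N, hN⟩ := exists_nat_gt (ρ / m)
    have hN0 : 0 < (N:ℝ) + 1 := by positivity
    have hlt : ρ / (N+1) < m := by
      rw [div_lt_iff₀ hN0]
      have : ρ / m < N + 1 := hN.trans (by linarith)
      calc ρ = (ρ/m) * m := by field_simp
        _ < (N+1) * m := by exact mul_lt_mul_of_pos_right this hm0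
        _ = m * (N+1) := by ring
    refine mem_iUnion.2 ⟨N, ⟨?_, ?_⟩⟩
    · have : m ≤ x - u := min_le_left _ _
      linarith
    · have : m ≤ v - x := min_le_right _ _
      linarith

lemma notMem_image_Icc {w s t x : ℝ} (hws : w ≤ s) (htw : t < w + 1)
    (hx : x ∈ Ico w (w+1)) (hxs : x ∉ Icc s t) :
    (x : Circ) ∉ ((↑) : ℝ → Circ) '' Icc s t := by
  rintro ⟨y, hy, he⟩
  have hyI : y ∈ Ico w (w+1) := ⟨hws.trans hy.1, lt_of_le_of_lt hy.2 htw⟩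
  rw [injOn_coe w hyI hx he] at hy
  exact hxs hy

lemma closure_oarc_subset {s t : ℝ} (hst : s < t) (hts : t < s + 1) :
    closure (oarc (s:Circ) (t:Circ)) ⊆ ((↑) : ℝ → Circ) '' Icc s t := by
  rw [oarc_coe hst hts]
  refine closure_minimal (image_mono Ioo_subset_Icc_self) ?_
  exact (isCompact_Icc.image (AddCircle.continuous_mk' 1)).isClosed

/-- closed arc as image of a real interval -/
def arcA (s t : ℝ) : Set Circ := ((↑) : ℝ → Circ) '' Icc s t

lemma arcA_def (s t : ℝ) : arcA s t = ((↑) : ℝ → Circ) '' Icc s t := rfl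

lemma Icc_sub_Ico {w u v : ℝ} (h1 : w ≤ u) (h2 : v < w + 1) : Icc u v ⊆ Ico w (w+1) :=
  fun _ hx => ⟨h1.trans hx.1, lt_of_le_of_lt hx.2 h2⟩

lemma arcA_mono {s t s' t' : ℝ} (h1 : s' ≤ s) (h2 : t ≤ t') : arcA s t ⊆ arcA s' t' :=
  image_mono (Icc_subset_Icc h1 h2)

lemma arcA_compact (s t : ℝ) : IsCompact (arcA s t) :=
  isCompact_Icc.image (AddCircle.continuous_mk' 1)

/-- for a finite-on-compacts Borel measure `μ` on pairs of circle
points giving zero mass to every slice `{a} × I` and `I × {a}` with `a` outside the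
closure of the arc `I`, the map `(a,b,c,d) ↦ μ([a,b] × [c,d])` is continuous on the
set of positively oriented 4-tuples. -/
theorem continuity_of_box_measure
    (μ : Measure (Circ × Circ)) [IsFiniteMeasureOnCompacts μ]
    (hslice : ∀ a c d : Circ, a ∉ closure (oarc c d) →
      μ ({a} ×ˢ oarc c d) = 0 ∧ μ ((oarc c d) ×ˢ {a}) = 0) :
    ContinuousOn
      (fun q : (Circ × Circ) × Circ × Circ =>
        μ ((carc q.1.1 q.1.2) ×ˢ (carc q.2.1 q.2.2)))
      {q : (Circ × Circ) × Circ × Circ | Pos4 q.1.1 q.1.2 q.2.1 q.2.2} := by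
  intro q hq
  obtain ⟨⟨a, b⟩, c, d⟩ := q
  obtain ⟨α, β, γ, δ, rfl, rfl, rfl, rfl, hαβ, hβγ, hγδ, hδα⟩ := pos4_lift hq
  clear hq
  have cont : Continuous ((↑) : ℝ → Circ) := AddCircle.continuous_mk' 1
  -- the margin ρ
  obtain ⟨ρ, hρ, hρ1, hρ2, hρ3, hρ4⟩ : ∃ ρ : ℝ, 0 < ρ ∧ ρ ≤ (β-α)/3 ∧ ρ ≤ (γ-β)/3 ∧
      ρ ≤ (δ-γ)/3 ∧ ρ ≤ (1+α-δ)/3 := by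
    refine ⟨min (min ((β-α)/3) ((γ-β)/3)) (min ((δ-γ)/3) ((1+α-δ)/3)), ?_, ?_, ?_, ?_, ?_⟩
    · apply lt_min <;> apply lt_min <;> linarith
    · exact le_trans (min_le_left _ _) (min_le_left _ _)
    · exact le_trans (min_le_left _ _) (min_le_right _ _)
    · exact le_trans (min_le_right _ _) (min_le_left _ _)
    · exact le_trans (min_le_right _ _) (min_le_right _ _)
  have hdivpos : ∀ n : ℕ, 0 < ρ/(n+1) := fun n => by positivity
  have hdivle : ∀ n : ℕ, ρ/(n+1) ≤ ρ := fun n => by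
    apply div_le_self hρ.le; exact le_add_of_nonneg_left (Nat.cast_nonneg n)
  have hdivanti : ∀ m n : ℕ, m ≤ n → ρ/(n+1) ≤ ρ/(m+1) := fun m n hmn => by
    have hc : (m:ℝ) + 1 ≤ (n:ℝ) + 1 := by exact_mod_cast Nat.succ_le_succ hmn
    exact div_le_div_of_nonneg_left hρ.le (by positivity) hc
  have hKcomp : IsCompact (arcA α β ×ˢ arcA γ δ) := (arcA_compact α β).prod (arcA_compact γ δ)
  have hKtop : μ (arcA α β ×ˢ arcA γ δ) ≠ ⊤ := hKcomp.measure_lt_top.ne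
  have hcarcAB : carc ((α:ℝ) : Circ) ((β:ℝ) : Circ) = arcA α β := carc_coe hαβ (by linarith)
  have hcarcCD : carc ((γ:ℝ) : Circ) ((δ:ℝ) : Circ) = arcA γ δ := carc_coe hγδ (by linarith)
  -- outer approximation
  have hOuterIn : ⋂ n : ℕ, (arcA (α-ρ/(n+1)) (β+ρ/(n+1)) ×ˢ arcA (γ-ρ/(n+1)) (δ+ρ/(n+1)))
      = arcA α β ×ˢ arcA γ δ := by
    have e1 : ⋂ n : ℕ, (((↑) : ℝ → Circ) '' Icc (α-ρ/(n+1)) (β+ρ/(n+1)))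
        = ((↑) : ℝ → Circ) '' Icc α β := by
      rw [iInter_image (w := α - ρ) (fun n => Icc_sub_Ico (by linarith [hdivle n])
        (by linarith [hdivle n])), real_iInter hαβ.le hρ]
    have e2 : ⋂ n : ℕ, (((↑) : ℝ → Circ) '' Icc (γ-ρ/(n+1)) (δ+ρ/(n+1)))
        = ((↑) : ℝ → Circ) '' Icc γ δ := by
      rw [iInter_image (w := γ - ρ) (fun n => Icc_sub_Ico (by linarith [hdivle n])
        (by linarith [hdivle n])), real_iInter hγδ.le hρ]
    simp only [arcA_def]
    rw [← e1, ← e2]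
    ext ⟨x, y⟩
    simp only [mem_iInter, Set.mem_prod, forall_and]
  have hOuter : Filter.Tendsto
      (fun n : ℕ => μ (arcA (α-ρ/(n+1)) (β+ρ/(n+1)) ×ˢ arcA (γ-ρ/(n+1)) (δ+ρ/(n+1))))
      Filter.atTop (nhds (μ (arcA α β ×ˢ arcA γ δ))) := by
    rw [← hOuterIn]
    exact tendsto_measure_iInter_atTop
      (fun n => (((arcA_compact _ _).isClosed.measurableSet).prod
        ((arcA_compact _ _).isClosed.measurableSet)).nullMeasurableSet)
      (fun m n hmn => Set.prod_mono
        (arcA_mono (by linarith [hdivanti m n hmn]) (by linarith [hdivanti m n hmn]))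
        (arcA_mono (by linarith [hdivanti m n hmn]) (by linarith [hdivanti m n hmn])))
      ⟨0, (((arcA_compact _ _).prod (arcA_compact _ _)).measure_lt_top).ne⟩
  -- inner approximation
  have hInnerUn : ⋃ n : ℕ, (arcA (α+ρ/(n+1)) (β-ρ/(n+1)) ×ˢ arcA (γ+ρ/(n+1)) (δ-ρ/(n+1)))
      = (((↑) : ℝ → Circ) '' Ioo α β) ×ˢ (((↑) : ℝ → Circ) '' Ioo γ δ) := by
    have hm1 : Monotone fun n : ℕ => arcA (α+ρ/(n+1)) (β-ρ/(n+1)) := fun m n hmn =>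
      arcA_mono (by linarith [hdivanti m n hmn]) (by linarith [hdivanti m n hmn])
    have hm2 : Monotone fun n : ℕ => arcA (γ+ρ/(n+1)) (δ-ρ/(n+1)) := fun m n hmn =>
      arcA_mono (by linarith [hdivanti m n hmn]) (by linarith [hdivanti m n hmn])
    rw [iUnion_prod_of_monotone hm1 hm2]
    simp only [arcA_def]
    rw [← image_iUnion, ← image_iUnion, real_iUnion hρ, real_iUnion hρ]
  have hInner : Filter.Tendsto
      (fun n : ℕ => μ (arcA (α+ρ/(n+1)) (β-ρ/(n+1)) ×ˢ arcA (γ+ρ/(n+1)) (δ-ρ/(n+1))))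
      Filter.atTop
      (nhds (μ ((((↑) : ℝ → Circ) '' Ioo α β) ×ˢ (((↑) : ℝ → Circ) '' Ioo γ δ)))) := by
    rw [← hInnerUn]
    exact tendsto_measure_iUnion_atTop (fun m n hmn => Set.prod_mono
      (arcA_mono (by linarith [hdivanti m n hmn]) (by linarith [hdivanti m n hmn]))
      (arcA_mono (by linarith [hdivanti m n hmn]) (by linarith [hdivanti m n hmn])))
  -- null slices
  have hslice1 : μ ({((α:ℝ):Circ)} ×ˢ arcA γ δ) = 0 := by
    have hnc : ((α:ℝ):Circ) ∉ closure (oarc ((γ-ρ : ℝ):Circ) ((δ+ρ : ℝ):Circ)) := by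
      intro hmem
      have h2 := closure_oarc_subset (s := γ-ρ) (t := δ+ρ) (by linarith) (by linarith) hmem
      rw [← AddCircle.coe_add_period 1 α] at h2
      exact notMem_image_Icc (le_refl _) (by linarith) ⟨by linarith, by linarith⟩
        (fun hc => by simp only [mem_Icc] at hc; linarith [hc.2]) h2
    refine measure_mono_null (Set.prod_mono (le_refl _) ?_) (hslice _ _ _ hnc).1
    rw [oarc_coe (by linarith : γ-ρ < δ+ρ) (by linarith), arcA_def]
    exact image_mono (Icc_subset_Ioo (by linarith) (by linarith))
  have hslice2 : μ ({((β:ℝ):Circ)} ×ˢ arcA γ δ) = 0 := by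
    have hnc : ((β:ℝ):Circ) ∉ closure (oarc ((γ-ρ : ℝ):Circ) ((δ+ρ : ℝ):Circ)) := by
      intro hmem
      have h2 := closure_oarc_subset (s := γ-ρ) (t := δ+ρ) (by linarith) (by linarith) hmem
      rw [← AddCircle.coe_add_period 1 β] at h2
      exact notMem_image_Icc (le_refl _) (by linarith) ⟨by linarith, by linarith⟩
        (fun hc => by simp only [mem_Icc] at hc; linarith [hc.2]) h2
    refine measure_mono_null (Set.prod_mono (le_refl _) ?_) (hslice _ _ _ hnc).1
    rw [oarc_coe (by linarith : γ-ρ < δ+ρ) (by linarith), arcA_def]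
    exact image_mono (Icc_subset_Ioo (by linarith) (by linarith))
  have hslice3 : μ (arcA α β ×ˢ {((γ:ℝ):Circ)}) = 0 := by
    have hnc : ((γ:ℝ):Circ) ∉ closure (oarc ((α-ρ : ℝ):Circ) ((β+ρ : ℝ):Circ)) := by
      intro hmem
      have h2 := closure_oarc_subset (s := α-ρ) (t := β+ρ) (by linarith) (by linarith) hmem
      exact notMem_image_Icc (le_refl _) (by linarith) ⟨by linarith, by linarith⟩
        (fun hc => by simp only [mem_Icc] at hc; linarith [hc.1]) h2
    refine measure_mono_null (Set.prod_mono ?_ (le_refl _)) (hslice _ _ _ hnc).2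
    rw [oarc_coe (by linarith : α-ρ < β+ρ) (by linarith), arcA_def]
    exact image_mono (Icc_subset_Ioo (by linarith) (by linarith))
  have hslice4 : μ (arcA α β ×ˢ {((δ:ℝ):Circ)}) = 0 := by
    have hnc : ((δ:ℝ):Circ) ∉ closure (oarc ((α-ρ : ℝ):Circ) ((β+ρ : ℝ):Circ)) := by
      intro hmem
      have h2 := closure_oarc_subset (s := α-ρ) (t := β+ρ) (by linarith) (by linarith) hmem
      exact notMem_image_Icc (le_refl _) (by linarith) ⟨by linarith, by linarith⟩
        (fun hc => by simp only [mem_Icc] at hc; linarith [hc.1]) h2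
    refine measure_mono_null (Set.prod_mono ?_ (le_refl _)) (hslice _ _ _ hnc).2
    rw [oarc_coe (by linarith : α-ρ < β+ρ) (by linarith), arcA_def]
    exact image_mono (Icc_subset_Ioo (by linarith) (by linarith))
  -- μ U = μ K
  have hUsubK : (((↑) : ℝ → Circ) '' Ioo α β) ×ˢ (((↑) : ℝ → Circ) '' Ioo γ δ)
      ⊆ arcA α β ×ˢ arcA γ δ :=
    Set.prod_mono (image_mono Ioo_subset_Icc_self) (image_mono Ioo_subset_Icc_self)
  have hdiffnull :
      μ ((arcA α β ×ˢ arcA γ δ) \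
        ((((↑) : ℝ → Circ) '' Ioo α β) ×ˢ (((↑) : ℝ → Circ) '' Ioo γ δ))) = 0 := by
    have hsub : (arcA α β ×ˢ arcA γ δ) \
        ((((↑) : ℝ → Circ) '' Ioo α β) ×ˢ (((↑) : ℝ → Circ) '' Ioo γ δ)) ⊆
        ({((α:ℝ):Circ)} ×ˢ arcA γ δ) ∪ ({((β:ℝ):Circ)} ×ˢ arcA γ δ)
        ∪ (arcA α β ×ˢ {((γ:ℝ):Circ)}) ∪ (arcA α β ×ˢ {((δ:ℝ):Circ)}) := by
      rintro ⟨x, y⟩ ⟨⟨hx, hy⟩, hn⟩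
      simp only [Set.mem_prod, not_and_or] at hn
      rcases hn with hn | hn
      · obtain ⟨x', hx', rfl⟩ := hx
        rcases eq_or_lt_of_le hx'.1 with he | hl
        · exact Or.inl (Or.inl (Or.inl ⟨by rw [← he]; rfl, hy⟩))
        · rcases eq_or_lt_of_le hx'.2 with he | hr
          · exact Or.inl (Or.inl (Or.inr ⟨by rw [he]; rfl, hy⟩))
          · exact absurd ⟨x', ⟨hl, hr⟩, rfl⟩ hn
      · obtain ⟨y', hy', rfl⟩ := hy
        rcases eq_or_lt_of_le hy'.1 with he | hl
        · exact Or.inl (Or.inr ⟨hx, by rw [← he]; rfl⟩)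
        · rcases eq_or_lt_of_le hy'.2 with he | hr
          · exact Or.inr ⟨hx, by rw [he]; rfl⟩
          · exact absurd ⟨y', ⟨hl, hr⟩, rfl⟩ hn
    exact measure_mono_null hsub (measure_union_null
      (measure_union_null (measure_union_null hslice1 hslice2) hslice3) hslice4)
  have hUK : μ ((((↑) : ℝ → Circ) '' Ioo α β) ×ˢ (((↑) : ℝ → Circ) '' Ioo γ δ))
      = μ (arcA α β ×ˢ arcA γ δ) := by
    refine le_antisymm (measure_mono hUsubK) ?_
    calc μ (arcA α β ×ˢ arcA γ δ)
        ≤ μ (((((↑) : ℝ → Circ) '' Ioo α β) ×ˢ (((↑) : ℝ → Circ) '' Ioo γ δ)) ∪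
            ((arcA α β ×ˢ arcA γ δ) \
              ((((↑) : ℝ → Circ) '' Ioo α β) ×ˢ (((↑) : ℝ → Circ) '' Ioo γ δ)))) :=
          measure_mono (fun x hx => by
            by_cases h : x ∈ (((↑) : ℝ → Circ) '' Ioo α β) ×ˢ (((↑) : ℝ → Circ) '' Ioo γ δ)
            · exact Or.inl h
            · exact Or.inr ⟨hx, h⟩)
      _ ≤ _ + _ := measure_union_le _ _
      _ = μ ((((↑) : ℝ → Circ) '' Ioo α β) ×ˢ (((↑) : ℝ → Circ) '' Ioo γ δ)) := by
          rw [hdiffnull, add_zero]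
  -- now the continuity
  show Filter.Tendsto _ (nhdsWithin _ _) _
  have hval : (fun q : (Circ × Circ) × Circ × Circ =>
      μ ((carc q.1.1 q.1.2) ×ˢ (carc q.2.1 q.2.2)))
      ((((α:ℝ):Circ), ((β:ℝ):Circ)), ((γ:ℝ):Circ), ((δ:ℝ):Circ))
      = μ (arcA α β ×ˢ arcA γ δ) := by
    simp only [hcarcAB, hcarcCD]
  rw [hval, ENNReal.tendsto_nhds hKtop]
  intro ε hε
  have h1 : ∀ᶠ n : ℕ in Filter.atTop,
      μ (arcA (α-ρ/(n+1)) (β+ρ/(n+1)) ×ˢ arcA (γ-ρ/(n+1)) (δ+ρ/(n+1)))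
        < μ (arcA α β ×ˢ arcA γ δ) + ε :=
    hOuter.eventually_lt_const (ENNReal.lt_add_right hKtop hε.ne')
  have h2 : ∀ᶠ n : ℕ in Filter.atTop, μ (arcA α β ×ˢ arcA γ δ) - ε ≤
      μ (arcA (α+ρ/(n+1)) (β-ρ/(n+1)) ×ˢ arcA (γ+ρ/(n+1)) (δ-ρ/(n+1))) := by
    rcases le_or_gt (μ (arcA α β ×ˢ arcA γ δ)) ε with hle | hlt
    · exact Filter.Eventually.of_forall fun n => by simp [tsub_eq_zero_of_le hle]
    · have hKne : μ (arcA α β ×ˢ arcA γ δ) ≠ 0 := fun h0 => by simp [h0] at hlt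
      have hlt2 : μ (arcA α β ×ˢ arcA γ δ) - ε
          < μ ((((↑) : ℝ → Circ) '' Ioo α β) ×ˢ (((↑) : ℝ → Circ) '' Ioo γ δ)) := by
        rw [hUK]
        exact ENNReal.sub_lt_self hKtop hKne hε.ne'
      exact (hInner.eventually_const_lt hlt2).mono fun n h => h.le
  obtain ⟨N, hN1, hN2⟩ := (h1.and h2).exists
  have hη0 : 0 < ρ/(N+1) := hdivpos N
  have hηρ : ρ/(N+1) ≤ ρ := hdivle N
  set η := ρ/(N+1) with hηdef
  have hopen : ∀ s t : ℝ, IsOpen (((↑) : ℝ → Circ) '' Ioo s t) :=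
    fun s t => QuotientAddGroup.isOpenMap_coe _ isOpen_Ioo
  have hVopen : IsOpen (((((↑) : ℝ → Circ) '' Ioo (α-η) (α+η)) ×ˢ
        (((↑) : ℝ → Circ) '' Ioo (β-η) (β+η))) ×ˢ
      ((((↑) : ℝ → Circ) '' Ioo (γ-η) (γ+η)) ×ˢ
        (((↑) : ℝ → Circ) '' Ioo (δ-η) (δ+η)))) :=
    (((hopen _ _).prod (hopen _ _)).prod ((hopen _ _).prod (hopen _ _)))
  have hq₀V : ((((α:ℝ):Circ), ((β:ℝ):Circ)), ((γ:ℝ):Circ), ((δ:ℝ):Circ)) ∈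
      (((((↑) : ℝ → Circ) '' Ioo (α-η) (α+η)) ×ˢ
        (((↑) : ℝ → Circ) '' Ioo (β-η) (β+η))) ×ˢ
      ((((↑) : ℝ → Circ) '' Ioo (γ-η) (γ+η)) ×ˢ
        (((↑) : ℝ → Circ) '' Ioo (δ-η) (δ+η)))) :=
    ⟨⟨⟨α, ⟨by linarith, by linarith⟩, rfl⟩, ⟨β, ⟨by linarith, by linarith⟩, rfl⟩⟩,
      ⟨γ, ⟨by linarith, by linarith⟩, rfl⟩, ⟨δ, ⟨by linarith, by linarith⟩, rfl⟩⟩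
  filter_upwards [mem_nhdsWithin_of_mem_nhds (hVopen.mem_nhds hq₀V)] with q hqV
  obtain ⟨⟨hq1, hq2⟩, hq3, hq4⟩ := hqV
  obtain ⟨α', hα', hα'e⟩ := hq1
  obtain ⟨β', hβ', hβ'e⟩ := hq2
  obtain ⟨γ', hγ', hγ'e⟩ := hq3
  obtain ⟨δ', hδ', hδ'e⟩ := hq4
  have hcab : carc q.1.1 q.1.2 = arcA α' β' := by
    rw [← hα'e, ← hβ'e]
    exact carc_coe (by linarith [hα'.2, hβ'.1]) (by linarith [hα'.1, hβ'.2])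
  have hccd : carc q.2.1 q.2.2 = arcA γ' δ' := by
    rw [← hγ'e, ← hδ'e]
    exact carc_coe (by linarith [hγ'.2, hδ'.1]) (by linarith [hγ'.1, hδ'.2])
  have hsubOut : (carc q.1.1 q.1.2) ×ˢ (carc q.2.1 q.2.2) ⊆
      arcA (α-ρ/(N+1)) (β+ρ/(N+1)) ×ˢ arcA (γ-ρ/(N+1)) (δ+ρ/(N+1)) := by
    rw [hcab, hccd]
    exact Set.prod_mono
      (arcA_mono (by linarith [hα'.1]) (by linarith [hβ'.2]))
      (arcA_mono (by linarith [hγ'.1]) (by linarith [hδ'.2]))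
  have hsubIn : arcA (α+ρ/(N+1)) (β-ρ/(N+1)) ×ˢ arcA (γ+ρ/(N+1)) (δ-ρ/(N+1)) ⊆
      (carc q.1.1 q.1.2) ×ˢ (carc q.2.1 q.2.2) := by
    rw [hcab, hccd]
    exact Set.prod_mono
      (arcA_mono (by linarith [hα'.2]) (by linarith [hβ'.1]))
      (arcA_mono (by linarith [hγ'.2]) (by linarith [hδ'.1]))
  exact ⟨le_trans hN2 (measure_mono hsubIn), le_trans (measure_mono hsubOut) hN1.le⟩
end
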